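/- arXiv:2209.11438 — 2 statements merged into one kernel-verified Lean document; each statement's English description precedes it below -/
import Mathlib

section
/- If all m null hypotheses are true and the p-values are independent Uniform[0,1], then the Benjamini–Hochberg procedure at level α rejects at least one hypothesis with probability at most α. -/
/-! On the event `k* = k ≥ 1` exactly `k` of the p-values lie below `c_k = kα/m`, so
`k · P(k* = k) = ∑ᵢ P(pᵢ ≤ c_k, k* = k)`. If `pᵢ ≤ c_k`, replacing `pᵢ` by `0` does not change
whether `k* = k`; hence the event `k* = k` in the `i`-th summand may be replaced by `k*ᵢ = k`,
where the leave-one-out cutoff `k*ᵢ` is computed with `pᵢ := 0` and is therefore independent of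
`pᵢ`. This gives `P(k* = k) ≤ (α/m) ∑ᵢ P(k*ᵢ = k)`, and summing over `k ≥ 1` bounds
`P(k* ≥ 1)` by `(α/m) · m = α`. -/

open MeasureTheory ProbabilityTheory

/-- The Benjamini–Hochberg cutoff `k*`: the largest `k ≤ m` such that the `k`-th order
statistic satisfies `p_(k) ≤ k α / m`, equivalently such that at least `k` of the
p-values are `≤ k α / m` (with `k* = 0` if no such `k ≥ 1` exists). -/
noncomputable def bhKstar (m : ℕ) (α : ℝ) (p : Fin m → ℝ) : ℕ :=
  ((Finset.range (m + 1)).filter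
    (fun k : ℕ => k ≤ (Finset.univ.filter (fun i : Fin m => p i ≤ (k : ℝ) * α / m)).card)).sup id

open scoped ENNReal

noncomputable def bhCount (m : ℕ) (α : ℝ) (p : Fin m → ℝ) (k : ℕ) : ℕ :=
  (Finset.univ.filter (fun i : Fin m => p i ≤ (k : ℝ) * α / m)).card

section Deterministic

variable {m : ℕ} {α : ℝ} {p : Fin m → ℝ}

lemma bhCount_le (p : Fin m → ℝ) (k : ℕ) : bhCount m α p k ≤ m :=
  (Finset.card_filter_le _ _).trans_eq (Finset.card_fin m)

lemma bhCount_mono (hα : 0 ≤ α) (p : Fin m → ℝ) : Monotone (bhCount m α p) := by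
  intro j k hjk
  refine Finset.card_le_card fun i hi => ?_
  simp only [Finset.mem_filter] at hi ⊢
  exact ⟨hi.1, hi.2.trans (by gcongr)⟩

lemma mem_bhKstar_candidates {k : ℕ} :
    k ∈ (Finset.range (m + 1)).filter (fun k => k ≤ bhCount m α p k) ↔
      k ≤ m ∧ k ≤ bhCount m α p k := by
  rw [Finset.mem_filter, Finset.mem_range, Nat.lt_succ_iff]

lemma le_bhKstar {k : ℕ} (hkm : k ≤ m) (hk : k ≤ bhCount m α p k) : k ≤ bhKstar m α p :=
  Finset.le_sup (f := id) (mem_bhKstar_candidates.2 ⟨hkm, hk⟩)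

lemma bhKstar_le_and_le_bhCount (p : Fin m → ℝ) :
    bhKstar m α p ≤ m ∧ bhKstar m α p ≤ bhCount m α p (bhKstar m α p) := by
  obtain ⟨k, hk, hsup⟩ := Finset.exists_mem_eq_sup _
    ⟨0, mem_bhKstar_candidates (α := α) (p := p) |>.2 ⟨m.zero_le, Nat.zero_le _⟩⟩ id
  have hk_eq : bhKstar m α p = k := hsup
  rw [hk_eq]
  exact mem_bhKstar_candidates.1 hk

lemma bhKstar_eq_iff {k : ℕ} :
    bhKstar m α p = k ↔
      k ≤ m ∧ k ≤ bhCount m α p k ∧ ∀ j, k < j → j ≤ m → bhCount m α p j < j := by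
  constructor
  · rintro rfl
    exact ⟨(bhKstar_le_and_le_bhCount p).1, (bhKstar_le_and_le_bhCount p).2,
      fun j hkj hjm => lt_of_not_ge fun hj => (le_bhKstar hjm hj).not_gt hkj⟩
  · rintro ⟨hkm, hk, hmax⟩
    refine le_antisymm (Finset.sup_le fun j hj => ?_) (le_bhKstar hkm hk)
    obtain ⟨hjm, hj⟩ := mem_bhKstar_candidates.1 hj
    exact le_of_not_gt fun hkj => (hmax j hkj hjm).not_ge hj

lemma bhCount_bhKstar (hα : 0 ≤ α) (p : Fin m → ℝ) :
    bhCount m α p (bhKstar m α p) = bhKstar m α p := by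
  set k := bhKstar m α p with hk_def
  obtain ⟨hkm, hk, hmax⟩ := bhKstar_eq_iff.1 hk_def.symm
  refine le_antisymm ?_ hk
  rcases hkm.lt_or_eq with hlt | heq
  · exact Nat.le_of_lt_succ
      ((bhCount_mono hα p (Nat.le_succ k)).trans_lt (hmax _ (Nat.lt_succ_self k) hlt))
  · rw [heq]
    exact bhCount_le p m

lemma bhCount_update_zero (hα : 0 ≤ α) {i : Fin m} {k j : ℕ} (hpi : p i ≤ k * α / m)
    (hkj : k ≤ j) : bhCount m α (Function.update p i 0) j = bhCount m α p j := by
  have hthr : (k : ℝ) * α / m ≤ j * α / m := by gcongr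
  unfold bhCount
  congr 1
  refine Finset.filter_congr fun l _ => ?_
  rcases eq_or_ne l i with rfl | hl
  · simp only [Function.update_self]
    exact iff_of_true (by positivity) (hpi.trans hthr)
  · rw [Function.update_of_ne hl]

lemma bhKstar_update_zero_eq_iff (hα : 0 ≤ α) {i : Fin m} {k : ℕ} (hpi : p i ≤ k * α / m) :
    bhKstar m α (Function.update p i 0) = k ↔ bhKstar m α p = k := by
  have hcount := fun j (hkj : k ≤ j) => bhCount_update_zero hα hpi hkj
  rw [bhKstar_eq_iff, bhKstar_eq_iff, hcount k le_rfl]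
  refine and_congr_right' (and_congr_right' (forall_congr' fun j => imp_congr_right fun hkj => ?_))
  rw [hcount j hkj.le]

lemma measurable_bhCount (m : ℕ) (α : ℝ) (k : ℕ) :
    Measurable fun p : Fin m → ℝ => bhCount m α p k := by
  simp only [bhCount, Finset.card_filter]
  exact Finset.measurable_sum _ fun i _ => Measurable.ite
    (measurableSet_le (measurable_pi_apply i) measurable_const) measurable_const measurable_const

lemma measurable_bhKstar (m : ℕ) (α : ℝ) : Measurable (bhKstar m α) := by
  refine measurable_to_countable' fun k => ?_
  have hcount (j : ℕ) {s : Set ℕ} (hs : MeasurableSet s) :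
      Measurable fun p => bhCount m α p j ∈ s :=
    measurableSet_setOfPred.1 (measurable_bhCount m α j hs)
  simp only [Set.preimage, Set.mem_singleton_iff, bhKstar_eq_iff]
  refine measurableSet_setOfPred.2 ?_
  exact measurable_const.and ((hcount k measurableSet_Ici).and (Measurable.forall fun j =>
    measurable_const.imp (measurable_const.imp (hcount j measurableSet_Iio))))

end Deterministic

section Probability

variable {Ω : Type*} [MeasurableSpace Ω] {μ : Measure Ω}

lemma ProbabilityTheory.iIndepFun.indepFun_comp_update {ι β γ : Type*} [Fintype ι] [DecidableEq ι]
    [MeasurableSpace β] [MeasurableSpace γ] {X : ι → Ω → β} (hX : iIndepFun X μ)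
    (hmeas : ∀ i, Measurable (X i)) (i : ι) (c : β) {f : (ι → β) → γ} (hf : Measurable f) :
    IndepFun (X i) (fun ω => f (Function.update (fun j => X j ω) i c)) μ := by
  have hrest := (hX.indepFun_finset {i} {i}ᶜ disjoint_compl_right hmeas).comp
    (measurable_pi_apply ⟨i, Finset.mem_singleton_self i⟩)
    (hf.comp (measurable_pi_lambda
      (fun (v : ({i}ᶜ : Finset ι) → β) j => if h : j = i then c else v ⟨j, by simpa using h⟩)
      fun j => by split_ifs <;> fun_prop))
  convert hrest using 1
  · rfl
  funext ω
  show f _ = f _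
  congr 1
  ext j
  rcases eq_or_ne j i with rfl | h <;> simp [*]

lemma measure_setOf_le_le_ofReal_of_map_eq_restrict_Icc {X : Ω → ℝ} (hX : Measurable X)
    (hunif : μ.map X = volume.restrict (Set.Icc 0 1)) (c : ℝ) :
    μ {ω | X ω ≤ c} ≤ ENNReal.ofReal c :=
  calc μ {ω | X ω ≤ c} = volume (Set.Iic c ∩ Set.Icc 0 1) := by
        rw [← Measure.restrict_apply measurableSet_Iic, ← hunif,
          Measure.map_apply hX measurableSet_Iic]
        rfl
    _ ≤ volume (Set.Icc 0 c) :=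
        measure_mono fun x ⟨hxc, hx0, _⟩ => ⟨hx0, hxc⟩
    _ = ENNReal.ofReal c := by rw [Real.volume_Icc, sub_zero]

open Classical in
lemma sum_measure_inter_eq_mul_of_card_eq {ι : Type*} [Fintype ι] {S : ι → Set Ω} {A : Set Ω}
    (hS : ∀ i, MeasurableSet (S i)) (hA : MeasurableSet A) {k : ℕ}
    (hk : ∀ ω ∈ A, (Finset.univ.filter fun i => ω ∈ S i).card = k) :
    ∑ i, μ (S i ∩ A) = k * μ A := by
  calc ∑ i, μ (S i ∩ A) = ∑ i, ∫⁻ ω in A, (S i).indicator 1 ω ∂μ := by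
        refine Finset.sum_congr rfl fun i _ => ?_
        rw [lintegral_indicator_one (hS i), Measure.restrict_apply (hS i)]
    _ = ∫⁻ ω in A, ∑ i, (S i).indicator 1 ω ∂μ :=
        (lintegral_finsetSum _ fun i _ => measurable_one.indicator (hS i)).symm
    _ = ∫⁻ _ in A, (k : ℝ≥0∞) ∂μ := by
        refine setLIntegral_congr_fun hA fun ω hω => ?_
        rw [← hk ω hω, Finset.card_filter]
        push_cast
        simp [Set.indicator_apply]
    _ = k * μ A := by rw [setLIntegral_const]

end Probability

section BenjaminiHochberg

variable {Ω : Type*} [MeasurableSpace Ω] {μ : Measure Ω} {m : ℕ} {α : ℝ} {p : Fin m → Ω → ℝ}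

lemma measure_bhKstar_eq_le (hmeas : ∀ i, Measurable (p i)) (hindep : iIndepFun p μ)
    (hunif : ∀ i, μ.map (p i) = volume.restrict (Set.Icc 0 1)) (hα : 0 ≤ α) {k : ℕ}
    (hk : k ≠ 0) :
    μ {ω | bhKstar m α (fun i => p i ω) = k} ≤
      ENNReal.ofReal (α / m) *
        ∑ i, μ {ω | bhKstar m α (Function.update (fun j => p j ω) i 0) = k} := by
  set A := {ω | bhKstar m α (fun i => p i ω) = k}
  set B := fun i => {ω | bhKstar m α (Function.update (fun j => p j ω) i 0) = k}
  set S := fun i => {ω | p i ω ≤ k * α / m}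
  have hS i : MeasurableSet (S i) := measurableSet_le (hmeas i) measurable_const
  have hA : MeasurableSet A :=
    (measurable_bhKstar m α).comp (measurable_pi_lambda _ hmeas) (measurableSet_singleton k)
  have hcount : ∑ i, μ (S i ∩ A) = k * μ A := by
    refine sum_measure_inter_eq_mul_of_card_eq hS hA fun ω (hω : bhKstar m α _ = k) => ?_
    have hfix := bhCount_bhKstar hα (fun i => p i ω)
    rw [hω] at hfix
    rw [← hfix, bhCount]
    congr
  have hterm i : μ (S i ∩ A) ≤ ENNReal.ofReal (k * α / m) * μ (B i) := by
    have hSA : S i ∩ A = S i ∩ B i := by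
      ext ω
      exact and_congr_right fun hpi => (bhKstar_update_zero_eq_iff hα hpi).symm
    have hindep_i : μ (S i ∩ B i) = μ (S i) * μ (B i) :=
      (hindep.indepFun_comp_update hmeas i 0 (measurable_bhKstar m α)).measure_inter_preimage_eq_mul
        _ _ measurableSet_Iic (measurableSet_singleton k)
    rw [hSA, hindep_i]
    gcongr
    exact measure_setOf_le_le_ofReal_of_map_eq_restrict_Icc (hmeas i) (hunif i) _
  have hk0 : (k : ℝ≥0∞) ≠ 0 := Nat.cast_ne_zero.2 hk
  refine (ENNReal.mul_le_mul_iff_right hk0 (ENNReal.natCast_ne_top k)).1 ?_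
  calc (k : ℝ≥0∞) * μ A = ∑ i, μ (S i ∩ A) := hcount.symm
    _ ≤ ∑ i, ENNReal.ofReal (k * α / m) * μ (B i) := Finset.sum_le_sum fun i _ => hterm i
    _ = k * (ENNReal.ofReal (α / m) * ∑ i, μ (B i)) := by
        rw [← Finset.mul_sum, mul_div_assoc, ENNReal.ofReal_mul (Nat.cast_nonneg k),
          ENNReal.ofReal_natCast, mul_assoc]

end BenjaminiHochberg

theorem stmt3_general {Ω : Type*} [MeasurableSpace Ω] (μ : Measure Ω) [IsProbabilityMeasure μ]
    (m : ℕ) (p : Fin m → Ω → ℝ) (hmeas : ∀ i, Measurable (p i))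
    (hindep : iIndepFun p μ)
    (hunif : ∀ i, Measure.map (p i) μ = volume.restrict (Set.Icc (0 : ℝ) 1))
    (α : ℝ) (hα0 : 0 ≤ α) :
    μ {ω | 1 ≤ bhKstar m α (fun i => p i ω)} ≤ ENNReal.ofReal α := by
  set K := fun ω => bhKstar m α (fun i => p i ω)
  set K' := fun i ω => bhKstar m α (Function.update (fun j => p j ω) i 0)
  have hK : Measurable K := (measurable_bhKstar m α).comp (measurable_pi_lambda _ hmeas)
  have hK' i : Measurable (K' i) :=
    (measurable_bhKstar m α).comp (measurable_update_left.comp (measurable_pi_lambda _ hmeas))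
  have hfibers {f : Ω → ℕ} (hf : Measurable f) :
      ∑ k ∈ Finset.Icc 1 m, μ (f ⁻¹' {k}) = μ (f ⁻¹' ↑(Finset.Icc 1 m)) :=
    sum_measure_preimage_singleton _ fun k _ => hf (measurableSet_singleton k)
  calc μ {ω | 1 ≤ K ω} ≤ μ (K ⁻¹' ↑(Finset.Icc 1 m)) :=
        measure_mono fun ω hω => Finset.mem_Icc.2 ⟨hω, (bhKstar_le_and_le_bhCount _).1⟩
    _ = ∑ k ∈ Finset.Icc 1 m, μ (K ⁻¹' {k}) := (hfibers hK).symm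
    _ ≤ ∑ k ∈ Finset.Icc 1 m, ENNReal.ofReal (α / m) * ∑ i, μ (K' i ⁻¹' {k}) :=
        Finset.sum_le_sum fun k hk => measure_bhKstar_eq_le hmeas hindep hunif hα0
          (Nat.one_le_iff_ne_zero.1 (Finset.mem_Icc.1 hk).1)
    _ = ENNReal.ofReal (α / m) * ∑ i, ∑ k ∈ Finset.Icc 1 m, μ (K' i ⁻¹' {k}) := by
        rw [← Finset.mul_sum, Finset.sum_comm]
    _ ≤ ENNReal.ofReal (α / m) * ∑ _i : Fin m, 1 := by
        gcongr with i
        exact (hfibers (hK' i)).trans_le prob_le_one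
    _ ≤ ENNReal.ofReal α := by
        rcases Nat.eq_zero_or_pos m with rfl | hm
        · simp
        rw [Finset.sum_const, Finset.card_univ, Fintype.card_fin, nsmul_one,
          ← ENNReal.ofReal_natCast, ← ENNReal.ofReal_mul (by positivity),
          div_mul_cancel₀ _ (by positivity)]

/-- If all `m` null hypotheses are true and the p-values are independent `Uniform[0,1]`,
then the Benjamini–Hochberg procedure at level `α` rejects at least one hypothesis
(i.e. `k* ≥ 1`) with probability at most `α`. -/
theorem stmt3 {Ω : Type*} [MeasurableSpace Ω] (μ : Measure Ω) [IsProbabilityMeasure μ]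
    (m : ℕ) (hm : 0 < m) (p : Fin m → Ω → ℝ) (hmeas : ∀ i, Measurable (p i))
    (hindep : iIndepFun p μ)
    (hunif : ∀ i, Measure.map (p i) μ = volume.restrict (Set.Icc (0 : ℝ) 1))
    (α : ℝ) (hα0 : 0 ≤ α) (hα1 : α ≤ 1) :
    μ {ω | 1 ≤ bhKstar m α (fun i => p i ω)} ≤ ENNReal.ofReal α :=
  stmt3_general μ m p hmeas hindep hunif α hα0
end

section
/- Let Δ = σ²λ₄ − λ₂² > 0. The function G(u) = Φ(u√(λ₄/Δ)) − √(2πλ₂²/(λ₄σ²)) · φ(u/σ) · Φ(u√(λ₂²/(Δσ²))) is nondecreasing in u; i.e., the Palm distribution 1 − F_γ is a genuine CDF. -/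
/-- The standard normal density `φ`. -/
noncomputable def phi (x : ℝ) : ℝ := (Real.sqrt (2 * Real.pi))⁻¹ * Real.exp (-x ^ 2 / 2)

/-- The standard normal CDF `Φ`. -/
noncomputable def Phi (x : ℝ) : ℝ := ∫ t in Set.Iic x, phi t

/-!
Write `a = √(λ₄/Δ)`, `b = √(λ₂²/(Δσ²))`, `c = √(2πλ₂²/(λ₄σ²))`, so that
`G(u) = Φ(au) − c φ(u/σ) Φ(bu)`. Since `a² = σ⁻² + b²`, the Gaussian factor `φ(au)` splits as
`√(2π) φ(u/σ) φ(bu)`, and since `ca = b√(2π)`, the derivative collapses to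
`G'(u) = √(2π)/(aσ²) · φ(u/σ) · (φ(bu) + bu Φ(bu))`.
The last factor is `∫_{s ≤ t} (t − s) φ(s) ds ≥ 0` at `t = bu`, so `G' ≥ 0`.
-/

open Real MeasureTheory Set Filter

lemma phi_pos (x : ℝ) : 0 < phi x := by
  unfold phi
  positivity

lemma continuous_phi : Continuous phi := by
  unfold phi
  fun_prop

lemma hasDerivAt_phi (x : ℝ) : HasDerivAt phi (-x * phi x) x := by
  unfold phi
  have hexponent : HasDerivAt (fun x : ℝ => -x ^ 2 / 2) (-x) x := by
    simpa using ((hasDerivAt_pow 2 x).neg.div_const 2).congr_deriv (by ring)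
  exact (hexponent.exp.const_mul _).congr_deriv (by ring)

lemma tendsto_phi_atBot : Tendsto phi atBot (nhds 0) := by
  have hexponent : Tendsto (fun x : ℝ => -x ^ 2 / 2) atBot atBot := by
    refine Tendsto.atBot_div_const (by norm_num) (tendsto_neg_atTop_atBot.comp ?_)
    simpa [sq] using tendsto_id.atBot_mul_atBot₀ (tendsto_id (α := ℝ))
  have := (tendsto_exp_atBot.comp hexponent).const_mul (√(2 * π))⁻¹
  rwa [mul_zero] at this

lemma integrable_phi : Integrable phi := by
  convert (integrable_exp_neg_mul_sq (b := 1 / 2) (by norm_num)).const_mul (√(2 * π))⁻¹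
    using 2 with x
  unfold phi
  ring_nf

lemma integrable_mul_phi : Integrable fun s : ℝ => s * phi s := by
  convert (integrable_mul_exp_neg_mul_sq (b := 1 / 2) (by norm_num)).const_mul (√(2 * π))⁻¹
    using 2 with x
  unfold phi
  ring_nf

lemma hasDerivAt_Phi (x : ℝ) : HasDerivAt Phi (phi x) x := by
  have hPhi : (fun y => (∫ t in (0 : ℝ)..y, phi t) + Phi 0) = Phi := by
    funext y
    have := intervalIntegral.integral_Iic_sub_Iic integrable_phi.integrableOn
      integrable_phi.integrableOn (a := 0) (b := y)
    unfold Phi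
    linarith
  rw [← hPhi]
  exact (intervalIntegral.integral_hasDerivAt_right integrable_phi.intervalIntegrable
    continuous_phi.stronglyMeasurable.stronglyMeasurableAtFilter
    continuous_phi.continuousAt).add_const _

lemma integral_Iic_mul_phi (t : ℝ) : ∫ s in Iic t, s * phi s = -phi t := by
  have := integral_Iic_of_hasDerivAt_of_tendsto' (f := fun s => -phi s) (a := t)
    (fun x _ => (hasDerivAt_phi x).neg.congr_deriv (by ring)) integrable_mul_phi.integrableOn
    (by simpa using tendsto_phi_atBot.neg)
  simpa using this

lemma integral_Iic_sub_mul_phi (t : ℝ) :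
    ∫ s in Iic t, (t - s) * phi s = phi t + t * Phi t := by
  simp_rw [sub_mul]
  rw [integral_sub (integrable_phi.const_mul t).integrableOn integrable_mul_phi.integrableOn,
    integral_const_mul, integral_Iic_mul_phi, Phi]
  ring

lemma phi_add_mul_Phi_nonneg (t : ℝ) : 0 ≤ phi t + t * Phi t := by
  rw [← integral_Iic_sub_mul_phi]
  exact setIntegral_nonneg measurableSet_Iic
    fun s hs => mul_nonneg (sub_nonneg.mpr hs) (phi_pos s).le

lemma phi_eq_of_sq_eq_add_sq {x y z : ℝ} (h : z ^ 2 = x ^ 2 + y ^ 2) :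
    phi z = √(2 * π) * phi x * phi y := by
  unfold phi
  rw [h, show -(x ^ 2 + y ^ 2) / 2 = -x ^ 2 / 2 + -y ^ 2 / 2 by ring, exp_add]
  have : √(2 * π) ≠ 0 := by positivity
  field_simp

section GaussianCombination

variable {σ a b c : ℝ}

lemma hasDerivAt_Phi_sub_mul_phi_mul_Phi (hσ : σ ≠ 0) (ha : a ≠ 0)
    (habσ : a ^ 2 = (σ⁻¹) ^ 2 + b ^ 2) (hca : c * a = b * √(2 * π)) (u : ℝ) :
    HasDerivAt (fun u => Phi (u * a) - c * phi (u / σ) * Phi (u * b))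
      (√(2 * π) / (a * σ ^ 2) * phi (u / σ) * (phi (u * b) + u * b * Phi (u * b))) u := by
  have hΦa := (hasDerivAt_Phi (u * a)).comp u (hasDerivAt_mul_const a)
  have hφσ := (hasDerivAt_phi (u / σ)).comp u ((hasDerivAt_id u).div_const σ)
  have hΦb := (hasDerivAt_Phi (u * b)).comp u (hasDerivAt_mul_const b)
  refine (hΦa.sub ((hφσ.const_mul c).mul hΦb)).congr_deriv ?_
  have hsplit : phi (u * a) = √(2 * π) * phi (u / σ) * phi (u * b) :=
    phi_eq_of_sq_eq_add_sq (by rw [mul_pow, habσ, div_eq_mul_inv]; ring)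
  have hc : c = b * √(2 * π) / a := by field_simp; linarith
  have habσ' : a ^ 2 * σ ^ 2 = 1 + b ^ 2 * σ ^ 2 := by rw [habσ]; field_simp
  simp only [Function.comp_apply, id]
  rw [hsplit, hc]
  field_simp
  linear_combination phi (u / σ) * phi (u * b) * habσ'

lemma monotone_Phi_sub_mul_phi_mul_Phi (hσ : σ ≠ 0) (ha : 0 < a)
    (habσ : a ^ 2 = (σ⁻¹) ^ 2 + b ^ 2) (hca : c * a = b * √(2 * π)) :
    Monotone fun u => Phi (u * a) - c * phi (u / σ) * Phi (u * b) := by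
  have hderiv := hasDerivAt_Phi_sub_mul_phi_mul_Phi hσ ha.ne' habσ hca
  refine monotone_of_deriv_nonneg (fun u => (hderiv u).differentiableAt) fun u => ?_
  rw [(hderiv u).deriv]
  exact mul_nonneg (mul_nonneg (by positivity) (phi_pos _).le) (phi_add_mul_Phi_nonneg _)

end GaussianCombination

theorem stmt6_general (σ lam2 lam4 : ℝ) (hσ : 0 < σ) (h4 : 0 < lam4)
    (Δ : ℝ) (hΔdef : Δ = σ ^ 2 * lam4 - lam2 ^ 2) (hΔ : 0 < Δ)
    (G : ℝ → ℝ)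
    (hG : ∀ u, G u = Phi (u * Real.sqrt (lam4 / Δ)) -
      Real.sqrt (2 * Real.pi * lam2 ^ 2 / (lam4 * σ ^ 2)) * phi (u / σ) *
        Phi (u * Real.sqrt (lam2 ^ 2 / (Δ * σ ^ 2)))) :
    Monotone G := by
  rw [show G = _ from funext hG]
  refine monotone_Phi_sub_mul_phi_mul_Phi hσ.ne' (by positivity) ?_ ?_
  · rw [sq_sqrt (by positivity), sq_sqrt (by positivity)]
    field_simp
    linarith
  · rw [← sqrt_mul (by positivity), ← sqrt_mul (by positivity)]
    congr 1
    field_simp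

/-- With `Δ = σ²λ₄ − λ₂² > 0`, the function
`G(u) = Φ(u√(λ₄/Δ)) − √(2πλ₂²/(λ₄σ²)) φ(u/σ) Φ(u√(λ₂²/(Δσ²)))`
is nondecreasing in `u`; i.e. the Palm distribution `1 − F_γ` is a genuine CDF. -/
theorem stmt6 (σ lam2 lam4 : ℝ) (hσ : 0 < σ) (h2 : 0 < lam2) (h4 : 0 < lam4)
    (Δ : ℝ) (hΔdef : Δ = σ ^ 2 * lam4 - lam2 ^ 2) (hΔ : 0 < Δ)
    (G : ℝ → ℝ)
    (hG : ∀ u, G u = Phi (u * Real.sqrt (lam4 / Δ)) -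
      Real.sqrt (2 * Real.pi * lam2 ^ 2 / (lam4 * σ ^ 2)) * phi (u / σ) *
        Phi (u * Real.sqrt (lam2 ^ 2 / (Δ * σ ^ 2)))) :
    Monotone G :=
  stmt6_general σ lam2 lam4 hσ h4 Δ hΔdef hΔ G hG
end
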